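/- For every integer n ≥ 0, the kernel of the even part of D(n) is 3-dimensional, spanned by E3, E4 and (m+2)E1 + E5, and the kernel of the odd part of D(n) is 3-dimensional, spanned by O3, O4 and O2 − (m+2)O5. Moreover, the kernel of the even part of D(−1) is 3-dimensional, spanned by E3, E4 and (m+2)E1 + E5, and the kernel of the odd part of D(−1) is 2-dimensional, spanned by O3 and O4; hence H¹(d_*) has dimension 3 in the even part and 2 in the odd part. -/

import Mathlib

namespace LinfCohomology

/- Cochain conventions: for `n ≥ 0`, the even part of `C(n)` has coordinates
`E1,…,E6` (for `φ^{1,0,n+1}_1, φ^{1,0,n+1}_2, φ^{0,1,n+1}_1, φ^{0,1,n+1}_2,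
φ^{0,0,n+2}_3, φ^{1,1,n}_3`) and the odd part has coordinates `O1,…,O6` (for
`ψ^{1,0,n+1}_3, ψ^{0,1,n+1}_3, ψ^{0,0,n+2}_1, ψ^{0,0,n+2}_2, ψ^{1,1,n}_1,
ψ^{1,1,n}_2`); `C(-1)` has even coordinates `E1,…,E5` and odd `O1,…,O4`. -/

/-- The even part of the coboundary operator `D(n)` of `d_* = ψ^{0,0,m+2}_1`, for
`n ≥ 0`: `E1 ↦ O3`, `E2 ↦ O4`, `E3 ↦ 0`, `E4 ↦ 0`, `E5 ↦ -(m+2)O3`,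
`E6 ↦ O2-(m+2)O5`. -/
def DeStar (K : Type*) [Field K] (m : ℕ) (_n : ℕ) :
    (Fin 6 → K) →ₗ[K] (Fin 6 → K) :=
  Matrix.mulVecLin
    !![0, 0, 0, 0, 0, 0;
       0, 0, 0, 0, 0, 1;
       1, 0, 0, 0, -((m : K) + 2), 0;
       0, 1, 0, 0, 0, 0;
       0, 0, 0, 0, 0, -((m : K) + 2);
       0, 0, 0, 0, 0, 0]

/-- The odd part of the coboundary operator `D(n)` of `d_*`, for `n ≥ 0`:
`O1 ↦ (m+2)E1+E5`, `O2 ↦ (m+2)E3`, `O3 ↦ 0`, `O4 ↦ 0`, `O5 ↦ E3`, `O6 ↦ E4`. -/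
def DoStar (K : Type*) [Field K] (m : ℕ) (_n : ℕ) :
    (Fin 6 → K) →ₗ[K] (Fin 6 → K) :=
  Matrix.mulVecLin
    !![(m : K) + 2, 0, 0, 0, 0, 0;
       0, 0, 0, 0, 0, 0;
       0, (m : K) + 2, 0, 0, 1, 0;
       0, 0, 0, 0, 0, 1;
       1, 0, 0, 0, 0, 0;
       0, 0, 0, 0, 0, 0]

/-- The even part of `D(-1)` of `d_*`: `E1 ↦ O3`, `E2 ↦ O4`, `E5 ↦ -(m+2)O3`. -/
def DeStarNeg1 (K : Type*) [Field K] (m : ℕ) : (Fin 5 → K) →ₗ[K] (Fin 6 → K) :=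
  Matrix.mulVecLin
    !![0, 0, 0, 0, 0;
       0, 0, 0, 0, 0;
       1, 0, 0, 0, -((m : K) + 2);
       0, 1, 0, 0, 0;
       0, 0, 0, 0, 0;
       0, 0, 0, 0, 0]

/-- The odd part of `D(-1)` of `d_*`: `O1 ↦ (m+2)E1+E5`, `O2 ↦ (m+2)E3`. -/
def DoStarNeg1 (K : Type*) [Field K] (m : ℕ) : (Fin 4 → K) →ₗ[K] (Fin 6 → K) :=
  Matrix.mulVecLin
    !![(m : K) + 2, 0, 0, 0;
       0, 0, 0, 0;
       0, (m : K) + 2, 0, 0;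
       0, 0, 0, 0;
       1, 0, 0, 0;
       0, 0, 0, 0]

@[simp]
theorem aux_cons_val_five {α : Type*} {m : ℕ} (x : α) (u : Fin (m+5) → α) :
    Matrix.vecCons x u 5 =
      Matrix.vecHead (Matrix.vecTail (Matrix.vecTail (Matrix.vecTail (Matrix.vecTail u)))) :=
  rfl

theorem aux_rank3 {d : ℕ} (K : Type*) [Field K] (a b c : Fin d → K)
    (h : LinearIndependent K ![a, b, c]) :
    Module.finrank K (Submodule.span K {a, b, c}) = 3 := by
  have hs : ({a, b, c} : Set (Fin d → K)) = Set.range ![a, b, c] := by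
    ext x; simp [Set.range, Fin.exists_fin_succ, eq_comm]
  rw [hs, finrank_span_eq_card h]
  simp

theorem aux_rank2 {d : ℕ} (K : Type*) [Field K] (a b : Fin d → K)
    (h : LinearIndependent K ![a, b]) :
    Module.finrank K (Submodule.span K {a, b}) = 2 := by
  have hs : ({a, b} : Set (Fin d → K)) = Set.range ![a, b] := by
    ext x; simp [Set.range, Fin.exists_fin_succ, eq_comm]
  rw [hs, finrank_span_eq_card h]
  simp

/-- For `d_*` and every `n ≥ 0`: the kernel of the even part of `D(n)` is
3-dimensional, spanned by `E3, E4, (m+2)E1+E5`, and the kernel of the odd part is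
3-dimensional, spanned by `O3, O4, O2-(m+2)O5`. The kernel of the even part of
`D(-1)` is 3-dimensional, spanned by `E3, E4, (m+2)E1+E5`, and the kernel of the
odd part of `D(-1)` is 2-dimensional, spanned by `O3, O4`: so `H¹(d_*)` has
dimension `3` in the even part and `2` in the odd part. -/
theorem dStar_kernels (K : Type*) [Field K] [CharZero K] (m n : ℕ) :
    (LinearMap.ker (DeStar K m n) =
        Submodule.span K {(![0, 0, 1, 0, 0, 0] : Fin 6 → K),
          ![0, 0, 0, 1, 0, 0], ![(m : K) + 2, 0, 0, 0, 1, 0]} ∧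
      Module.finrank K (LinearMap.ker (DeStar K m n)) = 3) ∧
    (LinearMap.ker (DoStar K m n) =
        Submodule.span K {(![0, 0, 1, 0, 0, 0] : Fin 6 → K),
          ![0, 0, 0, 1, 0, 0], ![0, 1, 0, 0, -((m : K) + 2), 0]} ∧
      Module.finrank K (LinearMap.ker (DoStar K m n)) = 3) ∧
    (LinearMap.ker (DeStarNeg1 K m) =
        Submodule.span K {(![0, 0, 1, 0, 0] : Fin 5 → K),
          ![0, 0, 0, 1, 0], ![(m : K) + 2, 0, 0, 0, 1]} ∧
      Module.finrank K (LinearMap.ker (DeStarNeg1 K m)) = 3) ∧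
    (LinearMap.ker (DoStarNeg1 K m) =
        Submodule.span K {(![0, 0, 1, 0] : Fin 4 → K), ![0, 0, 0, 1]} ∧
      Module.finrank K (LinearMap.ker (DoStarNeg1 K m)) = 2) := by
  have hker_e : LinearMap.ker (DeStar K m n) =
      Submodule.span K {(![0, 0, 1, 0, 0, 0] : Fin 6 → K),
        ![0, 0, 0, 1, 0, 0], ![(m : K) + 2, 0, 0, 0, 1, 0]} := by
    apply le_antisymm
    · intro x hx
      rw [LinearMap.mem_ker] at hx
      have hxv : x = ![x 0, x 1, x 2, x 3, x 4, x 5] := by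
        funext i; fin_cases i <;> rfl
      rw [hxv] at hx
      simp only [DeStar, Matrix.mulVecLin_apply, Matrix.cons_mulVec, Matrix.cons_dotProduct,
        Matrix.dotProduct_of_isEmpty, Matrix.cons_eq_zero_iff, Matrix.zero_empty,
        Matrix.head_cons, Matrix.tail_cons] at hx
      obtain ⟨-, h1, h2, h3, h4, -⟩ := hx
      have hx' : x = x 2 • ![0, 0, 1, 0, 0, 0] + x 3 • ![0, 0, 0, 1, 0, 0]
          + x 4 • ![(m : K) + 2, 0, 0, 0, 1, 0] := by
        funext i; fin_cases i <;> simp <;>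
          first
          | linear_combination h1 | linear_combination -h1
          | linear_combination h2 | linear_combination -h2
          | linear_combination h3 | linear_combination -h3
          | linear_combination h4 | linear_combination -h4
      rw [hx']
      exact Submodule.add_mem _ (Submodule.add_mem _
        (Submodule.smul_mem _ _ (Submodule.subset_span (by simp)))
        (Submodule.smul_mem _ _ (Submodule.subset_span (by simp))))
        (Submodule.smul_mem _ _ (Submodule.subset_span (by simp)))
    · rw [Submodule.span_le]
      rintro y (rfl | rfl | rfl) <;>
        · simp only [SetLike.mem_coe, LinearMap.mem_ker, DeStar, Matrix.mulVecLin_apply,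
            Matrix.cons_mulVec, Matrix.cons_dotProduct, Matrix.dotProduct_of_isEmpty,
            Matrix.cons_eq_zero_iff, Matrix.zero_empty, Matrix.head_cons, Matrix.tail_cons,
            Matrix.empty_eq]
          norm_num
          all_goals ring
  have hker_o : LinearMap.ker (DoStar K m n) =
      Submodule.span K {(![0, 0, 1, 0, 0, 0] : Fin 6 → K),
        ![0, 0, 0, 1, 0, 0], ![0, 1, 0, 0, -((m : K) + 2), 0]} := by
    apply le_antisymm
    · intro x hx
      rw [LinearMap.mem_ker] at hx
      have hxv : x = ![x 0, x 1, x 2, x 3, x 4, x 5] := by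
        funext i; fin_cases i <;> rfl
      rw [hxv] at hx
      simp only [DoStar, Matrix.mulVecLin_apply, Matrix.cons_mulVec, Matrix.cons_dotProduct,
        Matrix.dotProduct_of_isEmpty, Matrix.cons_eq_zero_iff, Matrix.zero_empty,
        Matrix.head_cons, Matrix.tail_cons] at hx
      obtain ⟨h0, -, h2, h3, h4, -⟩ := hx
      have hm2 : ((m : K) + 2) ≠ 0 := by
        have : ((m + 2 : ℕ) : K) ≠ 0 := Nat.cast_ne_zero.mpr (by omega)
        push_cast at this; exact this
      have h0' : ((m : K) + 2) * x 0 = 0 := by linear_combination h0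
      have hx0 : x 0 = 0 := (mul_eq_zero.mp h0').resolve_left hm2
      have hx' : x = x 2 • ![0, 0, 1, 0, 0, 0] + x 3 • ![0, 0, 0, 1, 0, 0]
          + x 1 • ![0, 1, 0, 0, -((m : K) + 2), 0] := by
        funext i; fin_cases i <;> simp <;>
          first
          | linear_combination hx0 | linear_combination -hx0
          | linear_combination h2 | linear_combination -h2
          | linear_combination h3 | linear_combination -h3
          | linear_combination h4 | linear_combination -h4
      rw [hx']
      exact Submodule.add_mem _ (Submodule.add_mem _
        (Submodule.smul_mem _ _ (Submodule.subset_span (by simp)))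
        (Submodule.smul_mem _ _ (Submodule.subset_span (by simp))))
        (Submodule.smul_mem _ _ (Submodule.subset_span (by simp)))
    · rw [Submodule.span_le]
      rintro y (rfl | rfl | rfl) <;>
        · simp only [SetLike.mem_coe, LinearMap.mem_ker, DoStar, Matrix.mulVecLin_apply,
            Matrix.cons_mulVec, Matrix.cons_dotProduct, Matrix.dotProduct_of_isEmpty,
            Matrix.cons_eq_zero_iff, Matrix.zero_empty, Matrix.head_cons, Matrix.tail_cons,
            Matrix.empty_eq]
          norm_num
          all_goals ring
  have hker_e1 : LinearMap.ker (DeStarNeg1 K m) =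
      Submodule.span K {(![0, 0, 1, 0, 0] : Fin 5 → K),
        ![0, 0, 0, 1, 0], ![(m : K) + 2, 0, 0, 0, 1]} := by
    apply le_antisymm
    · intro x hx
      rw [LinearMap.mem_ker] at hx
      have hxv : x = ![x 0, x 1, x 2, x 3, x 4] := by
        funext i; fin_cases i <;> rfl
      rw [hxv] at hx
      simp only [DeStarNeg1, Matrix.mulVecLin_apply, Matrix.cons_mulVec, Matrix.cons_dotProduct,
        Matrix.dotProduct_of_isEmpty, Matrix.cons_eq_zero_iff, Matrix.zero_empty,
        Matrix.head_cons, Matrix.tail_cons] at hx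
      obtain ⟨-, -, h2, h3, -, -⟩ := hx
      have hx' : x = x 2 • ![0, 0, 1, 0, 0] + x 3 • ![0, 0, 0, 1, 0]
          + x 4 • ![(m : K) + 2, 0, 0, 0, 1] := by
        funext i; fin_cases i <;> simp <;>
          first
          | linear_combination h2 | linear_combination -h2
          | linear_combination h3 | linear_combination -h3
      rw [hx']
      exact Submodule.add_mem _ (Submodule.add_mem _
        (Submodule.smul_mem _ _ (Submodule.subset_span (by simp)))
        (Submodule.smul_mem _ _ (Submodule.subset_span (by simp))))
        (Submodule.smul_mem _ _ (Submodule.subset_span (by simp)))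
    · rw [Submodule.span_le]
      rintro y (rfl | rfl | rfl) <;>
        · simp only [SetLike.mem_coe, LinearMap.mem_ker, DeStarNeg1, Matrix.mulVecLin_apply,
            Matrix.cons_mulVec, Matrix.cons_dotProduct, Matrix.dotProduct_of_isEmpty,
            Matrix.cons_eq_zero_iff, Matrix.zero_empty, Matrix.head_cons, Matrix.tail_cons,
            Matrix.empty_eq]
          norm_num
          all_goals ring
  have hker_o1 : LinearMap.ker (DoStarNeg1 K m) =
      Submodule.span K {(![0, 0, 1, 0] : Fin 4 → K), ![0, 0, 0, 1]} := by
    apply le_antisymm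
    · intro x hx
      rw [LinearMap.mem_ker] at hx
      have hxv : x = ![x 0, x 1, x 2, x 3] := by
        funext i; fin_cases i <;> rfl
      rw [hxv] at hx
      simp only [DoStarNeg1, Matrix.mulVecLin_apply, Matrix.cons_mulVec, Matrix.cons_dotProduct,
        Matrix.dotProduct_of_isEmpty, Matrix.cons_eq_zero_iff, Matrix.zero_empty,
        Matrix.head_cons, Matrix.tail_cons] at hx
      obtain ⟨h0, -, h2, -, -, -⟩ := hx
      have hm2 : ((m : K) + 2) ≠ 0 := by
        have : ((m + 2 : ℕ) : K) ≠ 0 := Nat.cast_ne_zero.mpr (by omega)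
        push_cast at this; exact this
      have h0' : ((m : K) + 2) * x 0 = 0 := by linear_combination h0
      have hx0 : x 0 = 0 := (mul_eq_zero.mp h0').resolve_left hm2
      have h2' : ((m : K) + 2) * x 1 = 0 := by linear_combination h2
      have hx1 : x 1 = 0 := (mul_eq_zero.mp h2').resolve_left hm2
      have hx' : x = x 2 • ![0, 0, 1, 0] + x 3 • ![0, 0, 0, 1] := by
        funext i; fin_cases i <;> simp <;>
          first
          | linear_combination hx0 | linear_combination -hx0
          | linear_combination hx1 | linear_combination -hx1
      rw [hx']
      exact Submodule.add_mem _
        (Submodule.smul_mem _ _ (Submodule.subset_span (by simp)))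
        (Submodule.smul_mem _ _ (Submodule.subset_span (by simp)))
    · rw [Submodule.span_le]
      rintro y (rfl | rfl) <;>
        · simp only [SetLike.mem_coe, LinearMap.mem_ker, DoStarNeg1, Matrix.mulVecLin_apply,
            Matrix.cons_mulVec, Matrix.cons_dotProduct, Matrix.dotProduct_of_isEmpty,
            Matrix.cons_eq_zero_iff, Matrix.zero_empty, Matrix.head_cons, Matrix.tail_cons,
            Matrix.empty_eq]
          norm_num
          all_goals ring
  refine ⟨⟨hker_e, ?_⟩, ⟨hker_o, ?_⟩, ⟨hker_e1, ?_⟩, ⟨hker_o1, ?_⟩⟩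
  · rw [hker_e]
    apply aux_rank3
    rw [Fintype.linearIndependent_iff]
    intro g hg
    have h2 := congrFun hg 2
    have h3 := congrFun hg 3
    have h4 := congrFun hg 4
    simp only [Fin.sum_univ_three, Fin.sum_univ_two, Matrix.cons_val_zero, Matrix.cons_val_one,
      Matrix.head_cons, Matrix.cons_val_two, Matrix.tail_cons, Matrix.cons_val_three,
      Matrix.cons_val_four, Pi.add_apply, Pi.smul_apply, smul_eq_mul, Pi.zero_apply,
      mul_zero, mul_one, add_zero, zero_add, mul_neg] at h2 h3 h4
    intro i; fin_cases i <;>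
      first
      | exact h1 | exact h2 | exact h3 | exact h4
      | linear_combination h1 | linear_combination -h1
      | linear_combination h2 | linear_combination -h2
      | linear_combination h3 | linear_combination -h3
      | linear_combination h4 | linear_combination -h4
  · rw [hker_o]
    apply aux_rank3
    rw [Fintype.linearIndependent_iff]
    intro g hg
    have h1 := congrFun hg 1
    have h2 := congrFun hg 2
    have h3 := congrFun hg 3
    simp only [Fin.sum_univ_three, Fin.sum_univ_two, Matrix.cons_val_zero, Matrix.cons_val_one,
      Matrix.head_cons, Matrix.cons_val_two, Matrix.tail_cons, Matrix.cons_val_three,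
      Matrix.cons_val_four, Pi.add_apply, Pi.smul_apply, smul_eq_mul, Pi.zero_apply,
      mul_zero, mul_one, add_zero, zero_add, mul_neg] at h1 h2 h3
    intro i; fin_cases i <;>
      first
      | exact h1 | exact h2 | exact h3 | exact h4
      | linear_combination h1 | linear_combination -h1
      | linear_combination h2 | linear_combination -h2
      | linear_combination h3 | linear_combination -h3
      
  · rw [hker_e1]
    apply aux_rank3
    rw [Fintype.linearIndependent_iff]
    intro g hg
    have h2 := congrFun hg 2
    have h3 := congrFun hg 3
    have h4 := congrFun hg 4
    simp only [Fin.sum_univ_three, Fin.sum_univ_two, Matrix.cons_val_zero, Matrix.cons_val_one,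
      Matrix.head_cons, Matrix.cons_val_two, Matrix.tail_cons, Matrix.cons_val_three,
      Matrix.cons_val_four, Pi.add_apply, Pi.smul_apply, smul_eq_mul, Pi.zero_apply,
      mul_zero, mul_one, add_zero, zero_add, mul_neg] at h2 h3 h4
    intro i; fin_cases i <;>
      first
      | exact h1 | exact h2 | exact h3 | exact h4
      | linear_combination h1 | linear_combination -h1
      | linear_combination h2 | linear_combination -h2
      | linear_combination h3 | linear_combination -h3
      | linear_combination h4 | linear_combination -h4
  · rw [hker_o1]
    apply aux_rank2
    rw [Fintype.linearIndependent_iff]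
    intro g hg
    have h2 := congrFun hg 2
    have h3 := congrFun hg 3
    simp only [Fin.sum_univ_three, Fin.sum_univ_two, Matrix.cons_val_zero, Matrix.cons_val_one,
      Matrix.head_cons, Matrix.cons_val_two, Matrix.tail_cons, Matrix.cons_val_three,
      Matrix.cons_val_four, Pi.add_apply, Pi.smul_apply, smul_eq_mul, Pi.zero_apply,
      mul_zero, mul_one, add_zero, zero_add, mul_neg] at h2 h3
    intro i; fin_cases i <;>
      first
      | exact h2 | exact h3
      | linear_combination h2 | linear_combination -h2
      | linear_combination h3 | linear_combination -h3
      


end LinfCohomology
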